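/- Let Ω ⊂ ℝⁿ be a bounded open set and let p : ℝⁿ → ℝⁿ be a map of class C¹ on a neighborhood of cl(Ω) such that det Dp(x) > 0 for every x ∈ Ω and ∫_Ω det Dp(x) dx ≤ ℒⁿ(p(Ω)). Then p is almost everywhere injective on Ω: there exists a Lebesgue-null set N ⊆ Ω such that the restriction of p to Ω \ N is injective. -/

import Mathlib

/-!
By the inverse function theorem `p` is locally injective on `Ω`, so `Ω` splits into
countably many disjoint measurable pieces `A k` on each of which `p` is injective. The area
formula gives `∫_Ω det Dp = ∑ ℒⁿ(p(A k)) ≥ ℒⁿ(p(Ω))`, so the Ciarlet–Nečas condition forces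
equality, and then the images `p(A k)` can only overlap in a null set. As `det Dp ≠ 0`, the
area formula also shows that the preimage of this null set in `Ω` is null, and off that
preimage `p` is injective.
-/

open MeasureTheory Set Filter Topology Function
open scoped ENNReal

theorem pairwise_aedisjoint_of_tsum_le_measure_iUnion {α ι : Type*} [MeasurableSpace α]
    {μ : Measure α} [Countable ι] {S : ι → Set α} (hS : ∀ i, NullMeasurableSet (S i) μ)
    (hfin : ∑' i, μ (S i) ≠ ∞) (h : ∑' i, μ (S i) ≤ μ (⋃ i, S i)) :
    Pairwise (AEDisjoint μ on S) := by
  classical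
  intro i j hij
  -- the multiplicity `count` dominates the indicator of `⋃ k, S k` and has the same integral
  let count : α → ℝ≥0∞ := fun y => ∑' k, (S k).indicator 1 y
  have hle : (⋃ k, S k).indicator 1 ≤ count := fun y => by
    by_cases hy : y ∈ ⋃ k, S k
    · obtain ⟨k, hk⟩ := mem_iUnion.1 hy
      calc (⋃ k, S k).indicator 1 y = (S k).indicator 1 y := by simp [hy, hk]
        _ ≤ count y := ENNReal.le_tsum k
    · simp [hy]
  have hcount : ∫⁻ y, count y ∂μ = ∑' k, μ (S k) := by
    refine (lintegral_tsum fun k => aemeasurable_one.indicator₀ (hS k)).trans ?_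
    exact tsum_congr fun k => lintegral_indicator_one₀ (hS k)
  have hunion : ∫⁻ y, (⋃ k, S k).indicator 1 y ∂μ = μ (⋃ k, S k) :=
    lintegral_indicator_one₀ (.iUnion hS)
  have hae : (⋃ k, S k).indicator 1 =ᵐ[μ] count :=
    ae_eq_of_ae_le_of_lintegral_le (.of_forall hle)
      (hunion ▸ ne_top_of_le_ne_top hfin (measure_iUnion_le S))
      (.tsum fun k => aemeasurable_one.indicator₀ (hS k)) (by rwa [hcount, hunion])
  refine measure_mono_null (fun y ⟨hi, hj⟩ => ?_) (ae_iff.1 hae)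
  intro heq
  have htwo : 2 ≤ count y := by
    calc (2 : ℝ≥0∞) = ∑ k ∈ {i, j}, (S k).indicator 1 y := by
          simp [Finset.sum_pair hij, hi, hj, one_add_one_eq_two]
      _ ≤ count y := ENNReal.sum_le_tsum _
  rw [← heq, indicator_of_mem (mem_iUnion.2 ⟨i, hi⟩)] at htwo
  norm_num at htwo

theorem exists_measurable_partition_injOn {α β : Type*} [TopologicalSpace α]
    [SecondCountableTopology α] [MeasurableSpace α] [OpensMeasurableSpace α] {f : α → β}
    {s : Set α} (hs : MeasurableSet s) (hf : ∀ x ∈ s, ∃ V ∈ 𝓝 x, InjOn f V) :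
    ∃ A : ℕ → Set α, (∀ k, MeasurableSet (A k)) ∧ Pairwise (Disjoint on A) ∧
      ⋃ k, A k = s ∧ ∀ k, InjOn f (A k) := by
  choose! V hVx hVinj using hf
  obtain ⟨t, hts, htc, hst⟩ := TopologicalSpace.countable_cover_nhdsWithin
    fun x hx => mem_nhdsWithin_of_mem_nhds (interior_mem_nhds.2 (hVx x hx))
  rcases t.eq_empty_or_nonempty with rfl | ht
  · refine ⟨fun _ => ∅, fun _ => .empty, fun _ _ _ => disjoint_bot_left, ?_,
      fun _ => injOn_empty f⟩
    simpa [eq_comm] using hst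
  obtain ⟨x, rfl⟩ := htc.exists_eq_range ht
  refine ⟨disjointed fun k => interior (V (x k)) ∩ s,
    .disjointed fun k => isOpen_interior.measurableSet.inter hs, disjoint_disjointed _, ?_,
    fun k => (hVinj _ (hts ⟨k, rfl⟩)).mono ((disjointed_subset _ k).trans
      (inter_subset_left.trans interior_subset))⟩
  rw [iUnion_disjointed, ← iUnion_inter, inter_eq_right]
  simpa using hst

theorem HasStrictFDerivAt.exists_mem_nhds_injOn {𝕜 E F : Type*} [NontriviallyNormedField 𝕜]
    [NormedAddCommGroup E] [NormedSpace 𝕜 E] [CompleteSpace E] [NormedAddCommGroup F]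
    [NormedSpace 𝕜 F] [CompleteSpace F] {f : E → F} {f' : E ≃L[𝕜] F} {a : E}
    (hf : HasStrictFDerivAt f (f' : E →L[𝕜] F) a) : ∃ V ∈ 𝓝 a, InjOn f V :=
  ⟨_, hf.toOpenPartialHomeomorph.open_source.mem_nhds hf.mem_toOpenPartialHomeomorph_source,
    by simpa [hf.toOpenPartialHomeomorph_coe] using hf.toOpenPartialHomeomorph.injOn⟩

section Jacobian

variable {E : Type*} [NormedAddCommGroup E] [NormedSpace ℝ E] [FiniteDimensional ℝ E]
  [MeasurableSpace E] [BorelSpace E] (μ : Measure E) [μ.IsAddHaarMeasure]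
  {f : E → E} {f' : E → E →L[ℝ] E} {s : Set E}

theorem addHaar_inter_preimage_eq_zero (hs : MeasurableSet s)
    (hf' : ∀ x ∈ s, HasFDerivWithinAt f (f' x) s x) (hf : InjOn f s)
    (hdet : ∀ x ∈ s, (f' x).det ≠ 0) {t : Set E} (ht : μ t = 0) : μ (s ∩ f ⁻¹' t) = 0 := by
  wlog htm : MeasurableSet t generalizing t
  · exact measure_mono_null
      (inter_subset_inter_right _ (preimage_mono (subset_toMeasurable μ t)))
      (this (measure_toMeasurable t ▸ ht) (measurableSet_toMeasurable μ t))
  have hu : NullMeasurableSet (s ∩ f ⁻¹' t) μ := by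
    have hfm : AEMeasurable f (μ.restrict s) :=
      ContinuousOn.aemeasurable (fun x hx => (hf' x hx).continuousWithinAt) hs
    simpa [inter_comm] using
      (nullMeasurableSet_restrict hs.nullMeasurableSet).1 (hfm.nullMeasurableSet_preimage htm)
  have hzero : ∫⁻ x in s ∩ f ⁻¹' t, ENNReal.ofReal |(f' x).det| ∂μ = 0 := by
    rw [lintegral_abs_det_fderiv_eq_addHaar_image₀ μ hu
      (fun x hx => (hf' x hx.1).mono inter_subset_left) (hf.mono inter_subset_left)]
    exact measure_mono_null (image_inter_preimage f s t ▸ inter_subset_right) ht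
  have hae := (lintegral_eq_zero_iff'
    ((aemeasurable_ofReal_abs_det_fderivWithin μ hs hf').mono_measure
      (Measure.restrict_mono inter_subset_left le_rfl))).1 hzero
  rw [Filter.EventuallyEq, ae_restrict_iff'₀ hu] at hae
  refine measure_mono_null (fun x hx => ?_) (ae_iff.1 hae)
  exact fun h => by simpa [hdet x hx.1] using h hx

theorem exists_measure_zero_injOn_diff_of_lintegral_abs_det_le (hs : MeasurableSet s)
    (hf' : ∀ x ∈ s, HasFDerivWithinAt f (f' x) s x) (hdet : ∀ x ∈ s, (f' x).det ≠ 0)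
    (hloc : ∀ x ∈ s, ∃ V ∈ 𝓝 x, InjOn f V)
    (hfin : ∫⁻ x in s, ENNReal.ofReal |(f' x).det| ∂μ ≠ ∞)
    (hCN : ∫⁻ x in s, ENNReal.ofReal |(f' x).det| ∂μ ≤ μ (f '' s)) :
    ∃ N ⊆ s, μ N = 0 ∧ InjOn f (s \ N) := by
  obtain ⟨A, hAm, hAd, hAs, hAinj⟩ := exists_measurable_partition_injOn hs hloc
  have hAs' : ∀ k, A k ⊆ s := fun k => hAs ▸ subset_iUnion A k
  have hA' : ∀ k, ∀ x ∈ A k, HasFDerivWithinAt f (f' x) (A k) x :=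
    fun k x hx => (hf' x (hAs' k hx)).mono (hAs' k)
  have hsum : ∑' k, μ (f '' A k) = ∫⁻ x in s, ENNReal.ofReal |(f' x).det| ∂μ := by
    rw [← hAs, lintegral_iUnion hAm hAd]
    exact tsum_congr fun k =>
      (lintegral_abs_det_fderiv_eq_addHaar_image μ (hAm k) (hA' k) (hAinj k)).symm
  have hdisj : Pairwise (AEDisjoint μ on fun k => f '' A k) :=
    pairwise_aedisjoint_of_tsum_le_measure_iUnion
      (fun k => (measurable_image_of_fderivWithin (hAm k) (hA' k) (hAinj k)).nullMeasurableSet)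
      (hsum ▸ hfin) (by rwa [hsum, ← image_iUnion, hAs])
  set B := ⋃ i, ⋃ j, ⋃ (_ : i ≠ j), f '' A i ∩ f '' A j
  have hB : μ B = 0 :=
    measure_iUnion_null fun i => measure_iUnion_null fun j => measure_iUnion_null (hdisj ·)
  refine ⟨s ∩ f ⁻¹' B, inter_subset_left, ?_, ?_⟩
  · rw [← hAs, iUnion_inter]
    exact measure_iUnion_null fun k => addHaar_inter_preimage_eq_zero μ (hAm k) (hA' k)
      (hAinj k) (fun x hx => hdet x (hAs' k hx)) hB
  · rintro x ⟨hx, hxB⟩ y ⟨hy, -⟩ hxy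
    obtain ⟨i, hxi⟩ := mem_iUnion.1 (hAs ▸ hx)
    obtain ⟨j, hyj⟩ := mem_iUnion.1 (hAs ▸ hy)
    obtain rfl : i = j := by
      by_contra hij
      exact hxB ⟨hx, mem_iUnion₂.2 ⟨i, j, mem_iUnion.2
        ⟨hij, mem_image_of_mem f hxi, hxy ▸ mem_image_of_mem f hyj⟩⟩⟩
    exact hAinj i hxi hyj hxy

end Jacobian

/-- **A.e. injectivity from the Ciarlet–Nečas condition**: if `p` is `C¹` on a
neighborhood of `cl(Ω)`, has positive Jacobian determinant on the bounded open
set `Ω`, and satisfies the Ciarlet–Nečas condition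
`∫_Ω det Dp ≤ ℒⁿ(p(Ω))`, then `p` is injective outside a Lebesgue-null subset
of `Ω`. -/
theorem ciarlet_necas_ae_injective {n : ℕ}
    (Ω : Set (EuclideanSpace ℝ (Fin n)))
    (hΩopen : IsOpen Ω) (hΩbdd : Bornology.IsBounded Ω)
    (p : EuclideanSpace ℝ (Fin n) → EuclideanSpace ℝ (Fin n))
    (hreg : ∃ U : Set (EuclideanSpace ℝ (Fin n)),
      IsOpen U ∧ closure Ω ⊆ U ∧ ContDiffOn ℝ 1 p U)
    (hdet : ∀ x ∈ Ω, 0 < LinearMap.det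
      (fderiv ℝ p x : EuclideanSpace ℝ (Fin n) →ₗ[ℝ] EuclideanSpace ℝ (Fin n)))
    (hCN : ∫ x in Ω, LinearMap.det
        (fderiv ℝ p x : EuclideanSpace ℝ (Fin n) →ₗ[ℝ] EuclideanSpace ℝ (Fin n)) ≤
      (volume (p '' Ω)).toReal) :
    ∃ N : Set (EuclideanSpace ℝ (Fin n)),
      N ⊆ Ω ∧ volume N = 0 ∧ InjOn p (Ω \ N) := by
  obtain ⟨U, hU, hΩU, hp⟩ := hreg
  have hpΩ : ∀ x ∈ Ω, ContDiffAt ℝ 1 p x := fun x hx =>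
    hp.contDiffAt (hU.mem_nhds (hΩU (subset_closure hx)))
  have hdet_int : IntegrableOn (fun x => (fderiv ℝ p x).det) Ω :=
    ((ContinuousLinearMap.continuous_det.comp_continuousOn
      ((hp.continuousOn_fderiv_of_isOpen hU le_rfl).mono hΩU)).integrableOn_compact
        hΩbdd.isCompact_closure).mono_set subset_closure
  have hlint : ∫⁻ x in Ω, ENNReal.ofReal |(fderiv ℝ p x).det| =
      ENNReal.ofReal (∫ x in Ω, (fderiv ℝ p x).det) := by
    rw [ofReal_integral_eq_lintegral_ofReal hdet_int
      (ae_restrict_of_forall_mem hΩopen.measurableSet fun x hx => (hdet x hx).le)]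
    exact setLIntegral_congr_fun hΩopen.measurableSet fun x hx => by rw [abs_of_pos (hdet x hx)]
  refine exists_measure_zero_injOn_diff_of_lintegral_abs_det_le volume hΩopen.measurableSet
    (fun x hx => ((hpΩ x hx).differentiableAt one_ne_zero).hasFDerivAt.hasFDerivWithinAt)
    (fun x hx => (hdet x hx).ne') (fun x hx => ?_) (hlint ▸ ENNReal.ofReal_ne_top)
    (hlint ▸ ENNReal.ofReal_le_of_le_toReal hCN)
  have hstrict := (hpΩ x hx).hasStrictFDerivAt one_ne_zero
  rw [← (fderiv ℝ p x).coe_toContinuousLinearEquivOfDetNeZero (hdet x hx).ne'] at hstrict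
  exact hstrict.exists_mem_nhds_injOn
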